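/- arXiv:1603.01495 — 3 statements merged into one kernel-verified Lean document; each statement's English description precedes it below -/
import Mathlib

section
/- For t > 0 and s ∈ ℝ with z = t + is, and any d ≥ 0, the complex-time heat kernel on the hyperbolic plane satisfies |K_ℍ(z,d)| ≤ e^{s²/(4t)} t^{−3/2} (t²+s²)^{3/4} K_ℍ(τ, d), where τ = |z|²/t = (t²+s²)/t. -/
/-!
Since `|exp (-u² / (4z))| = exp (-u² / (4τ))` with `τ = |z|² / Re z`, moving the norm inside the
integral dominates the integral of `K_ℍ(z,d)` by that of `K_ℍ(τ,d)`; the stated constant is the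
ratio of the two prefactors.
-/

open Real MeasureTheory

/-- The complex-time heat kernel on the hyperbolic plane:
`K_ℍ(z,d) = (√2 e^{−z/4}/(4πz)^{3/2}) ∫_d^∞ u e^{−u²/(4z)}/√(cosh u − cosh d) du`. -/
noncomputable def heatKernelC (z : ℂ) (d : ℝ) : ℂ :=
  (Real.sqrt 2 : ℂ) * Complex.exp (-z / 4) / (4 * Real.pi * z) ^ ((3 : ℂ) / 2) *
    ∫ u in Set.Ioi d,
      (u : ℂ) * Complex.exp (-(u : ℂ) ^ 2 / (4 * z)) /
        (Real.sqrt (Real.cosh u - Real.cosh d) : ℂ)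

/-- The real-time heat kernel on the hyperbolic plane. -/
noncomputable def heatKernelR (t : ℝ) (d : ℝ) : ℝ :=
  Real.sqrt 2 * Real.exp (-t / 4) / (4 * Real.pi * t) ^ ((3 : ℝ) / 2) *
    ∫ u in Set.Ioi d,
      u * Real.exp (-u ^ 2 / (4 * t)) / Real.sqrt (Real.cosh u - Real.cosh d)

-- No hypothesis on `z`: if `Re z = 0`, both sides are `0` because `x / 0 = 0`.
theorem Complex.re_neg_ofReal_sq_div_four_mul (x : ℝ) (z : ℂ) :
    (-(x : ℂ) ^ 2 / (4 * z)).re = -x ^ 2 / (4 * (Complex.normSq z / z.re)) := by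
  rcases eq_or_ne z.re 0 with h | h
  · simp [Complex.div_re, h, ← Complex.ofReal_pow]
  · simp only [← Complex.ofReal_pow, Complex.div_re, Complex.neg_re, Complex.ofReal_re,
      Complex.mul_re, Complex.re_ofNat, Complex.im_ofNat, zero_mul, sub_zero, neg_mul,
      map_mul, Complex.normSq_ofNat, Complex.neg_im, Complex.ofReal_im, neg_zero, Complex.mul_im,
      add_zero, zero_div]
    field_simp

theorem norm_heatKernelC_integral_le (z : ℂ) {d : ℝ} (hd : 0 ≤ d) :
    ‖∫ u in Set.Ioi d, (u : ℂ) * Complex.exp (-(u : ℂ) ^ 2 / (4 * z)) /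
        (Real.sqrt (Real.cosh u - Real.cosh d) : ℂ)‖ ≤
      ∫ u in Set.Ioi d, u * Real.exp (-u ^ 2 / (4 * (Complex.normSq z / z.re))) /
        Real.sqrt (Real.cosh u - Real.cosh d) := by
  refine (norm_integral_le_integral_norm _).trans_eq (setIntegral_congr_fun measurableSet_Ioi ?_)
  intro u hu
  dsimp only
  rw [norm_div, norm_mul, Complex.norm_exp, Complex.re_neg_ofReal_sq_div_four_mul,
    Complex.norm_real, Complex.norm_real, Real.norm_of_nonneg (hd.trans hu.le),
    Real.norm_of_nonneg (Real.sqrt_nonneg _)]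

theorem norm_heatKernelC_prefactor_eq (z : ℂ) :
    ‖(Real.sqrt 2 : ℂ) * Complex.exp (-z / 4) / (4 * Real.pi * z) ^ ((3 : ℂ) / 2)‖ =
      Real.sqrt 2 * Real.exp (-z.re / 4) / (4 * Real.pi * ‖z‖) ^ ((3 : ℝ) / 2) := by
  have h32 : (3 : ℂ) / 2 = ((3 / 2 : ℝ) : ℂ) := by push_cast; ring
  rw [h32, norm_div, norm_mul, Complex.norm_cpow_real, Complex.norm_exp, Complex.norm_real,
    Real.norm_of_nonneg (Real.sqrt_nonneg _), norm_mul, norm_mul, Complex.norm_real,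
    Real.norm_of_nonneg Real.pi_pos.le]
  simp only [Complex.div_ofNat_re, Complex.neg_re, Complex.norm_ofNat]

theorem heatKernelR_prefactor_eq (t r : ℝ) (ht : 0 < t) (hr : 0 < r) :
    Real.sqrt 2 * Real.exp (-t / 4) / (4 * Real.pi * r) ^ ((3 : ℝ) / 2) =
      Real.exp ((r ^ 2 / t - t) / 4) * (r / t) ^ ((3 : ℝ) / 2) *
        (Real.sqrt 2 * Real.exp (-(r ^ 2 / t) / 4) / (4 * Real.pi * (r ^ 2 / t)) ^ ((3 : ℝ) / 2)) := by
  have hscale : 4 * Real.pi * (r ^ 2 / t) = 4 * Real.pi * r * (r / t) := by ring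
  have hexp : Real.exp (-t / 4) = Real.exp ((r ^ 2 / t - t) / 4) * Real.exp (-(r ^ 2 / t) / 4) := by
    rw [← Real.exp_add]; ring_nf
  have hpos : 0 < (r / t) ^ ((3 : ℝ) / 2) := by positivity
  rw [hscale, Real.mul_rpow (x := 4 * Real.pi * r) (by positivity) (by positivity), hexp]
  field_simp

theorem norm_heatKernelC_le (z : ℂ) (hz : 0 < z.re) {d : ℝ} (hd : 0 ≤ d) :
    ‖heatKernelC z d‖ ≤
      Real.exp ((‖z‖ ^ 2 / z.re - z.re) / 4) * (‖z‖ / z.re) ^ ((3 : ℝ) / 2) *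
        heatKernelR (‖z‖ ^ 2 / z.re) d := by
  have hz0 : 0 < ‖z‖ := norm_pos_iff.2 fun h => hz.ne' (by simp [h])
  rw [heatKernelC, heatKernelR, norm_mul, norm_heatKernelC_prefactor_eq,
    heatKernelR_prefactor_eq _ _ hz hz0, mul_assoc]
  gcongr
  simpa only [Complex.normSq_eq_norm_sq] using norm_heatKernelC_integral_le z hd

/-- For `z = t + is` with `t > 0` and `d ≥ 0`,
`|K_ℍ(z,d)| ≤ e^{s²/(4t)} t^{−3/2} (t²+s²)^{3/4} K_ℍ(τ, d)` where `τ = (t²+s²)/t`. -/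
theorem abs_heatKernel_complex_time_le (t s : ℝ) (ht : 0 < t) (d : ℝ) (hd : 0 ≤ d) :
    ‖heatKernelC (t + s * Complex.I) d‖ ≤
      Real.exp (s ^ 2 / (4 * t)) * t ^ (-(3 : ℝ) / 2) * (t ^ 2 + s ^ 2) ^ ((3 : ℝ) / 4) *
        heatKernelR ((t ^ 2 + s ^ 2) / t) d := by
  set z : ℂ := t + s * Complex.I
  have hre : z.re = t := by simp [z]
  have hnorm : ‖z‖ = (t ^ 2 + s ^ 2) ^ ((1 : ℝ) / 2) := by
    rw [← Real.sqrt_eq_rpow, Complex.norm_def, Complex.normSq_add_mul_I, sq, sq]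
  have hnorm_sq : ‖z‖ ^ 2 = t ^ 2 + s ^ 2 := by
    rw [← Complex.normSq_eq_norm_sq, Complex.normSq_add_mul_I]
  have hexp : ((t ^ 2 + s ^ 2) / t - t) / 4 = s ^ 2 / (4 * t) := by
    field_simp; ring
  have hpow : (‖z‖ / t) ^ ((3 : ℝ) / 2) = t ^ (-(3 : ℝ) / 2) * (t ^ 2 + s ^ 2) ^ ((3 : ℝ) / 4) := by
    rw [hnorm, Real.div_rpow (by positivity) ht.le, ← Real.rpow_mul (by positivity), neg_div,
      Real.rpow_neg ht.le, div_eq_inv_mul]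
    norm_num
  calc _ ≤ _ := norm_heatKernelC_le z (hre ▸ ht) hd
    _ = _ := by rw [hre, hnorm_sq, hexp, hpow]; ring
end

section
/- Let 0 < c < 1 and u ∈ ℝ. Then (1/2π) ∫_{−∞}^∞ e^{−(2πc + iu)r}/(1 + e^{−2πr}) dr = (1/4π) csc(πc + iu/2), where csc is the complex cosecant; in particular the integral converges absolutely. -/
/-! The substitution `t = sigmoid x = (1 + e^{-x})⁻¹` maps `ℝ` onto `(0, 1)` with
`dt = t (1 - t) dx` and `1 - t = sigmoid (-x)`, so it turns `∫ e^{-s x} / (1 + e^{-x}) dx` into the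
Beta integral `B(1 - s, s) = Γ(1 - s) Γ(s) = π / sin (π s)`. The theorem is the case
`s = c + i u / 2π`, after rescaling `x = 2π r`. -/

open Real MeasureTheory

theorem Complex.ofReal_exp_cpow (x : ℝ) (s : ℂ) : (Real.exp x : ℂ) ^ s = Complex.exp (x * s) := by
  rw [Complex.cpow_def_of_ne_zero (by exact_mod_cast (exp_pos x).ne'),
    ← Complex.ofReal_log (exp_pos x).le, Real.log_exp]

theorem Complex.betaIntegral_one_sub_self {s : ℂ} (hs₀ : 0 < s.re) (hs₁ : s.re < 1) :
    betaIntegral (1 - s) s = π / sin (π * s) := by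
  have h := Gamma_mul_Gamma_eq_betaIntegral (s := 1 - s) (t := s) (by simpa using hs₁) hs₀
  rw [sub_add_cancel, Gamma_one, one_mul] at h
  rw [← h, mul_comm, Gamma_mul_Gamma_one_sub]

namespace Real

theorem sigmoid_deriv_smul_betaIntegrand (a b : ℂ) (x : ℝ) :
    (sigmoid x * (1 - sigmoid x)) • ((sigmoid x : ℂ) ^ (a - 1) * (1 - (sigmoid x : ℂ)) ^ (b - 1)) =
      (sigmoid x : ℂ) ^ a * (sigmoid (-x) : ℂ) ^ b := by
  have h₀ : (sigmoid x : ℂ) ≠ 0 := by exact_mod_cast (sigmoid_pos x).ne'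
  have h₁ : (sigmoid (-x) : ℂ) ≠ 0 := by exact_mod_cast (sigmoid_pos (-x)).ne'
  have hneg : (1 - (sigmoid x : ℂ)) = sigmoid (-x) := by rw [sigmoid_neg]; push_cast; ring
  rw [hneg, Complex.cpow_sub _ _ h₀, Complex.cpow_sub _ _ h₁, Complex.cpow_one, Complex.cpow_one,
    Complex.real_smul, ← sigmoid_neg]
  push_cast
  field_simp

theorem integral_sigmoid_cpow_mul_sigmoid_neg_cpow_eq_betaIntegral {a b : ℂ} (ha : 0 < a.re)
    (hb : 0 < b.re) :
    Integrable (fun x : ℝ => (sigmoid x : ℂ) ^ a * (sigmoid (-x) : ℂ) ^ b) ∧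
      ∫ x : ℝ, (sigmoid x : ℂ) ^ a * (sigmoid (-x) : ℂ) ^ b = Complex.betaIntegral a b := by
  set G : ℝ → ℂ := fun t => (t : ℂ) ^ (a - 1) * (1 - (t : ℂ)) ^ (b - 1)
  have hderiv : ∀ x ∈ Set.univ, HasDerivWithinAt sigmoid (sigmoid x * (1 - sigmoid x)) Set.univ x :=
    fun x _ => (hasDerivAt_sigmoid x).hasDerivWithinAt
  have hinj : Set.InjOn sigmoid Set.univ := sigmoid_injective.injOn
  have himage : sigmoid '' Set.univ = Set.Ioo 0 1 := by rw [Set.image_univ, range_sigmoid]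
  have habs : ∀ x, |sigmoid x * (1 - sigmoid x)| = sigmoid x * (1 - sigmoid x) := fun x =>
    abs_of_pos (mul_pos (sigmoid_pos x) (sub_pos.2 (sigmoid_lt_one x)))
  have hbeta : IntegrableOn G (Set.Ioo 0 1) :=
    (Complex.betaIntegral_convergent ha hb).1.mono_set Set.Ioo_subset_Ioc_self
  constructor
  · have hsubst := (integrableOn_image_iff_integrableOn_abs_deriv_smul MeasurableSet.univ hderiv hinj G).1
      (himage ▸ hbeta)
    simpa only [habs, G, sigmoid_deriv_smul_betaIntegrand, integrableOn_univ] using hsubst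
  · have hsubst := integral_image_eq_integral_abs_deriv_smul MeasurableSet.univ hderiv hinj G
    rw [himage] at hsubst
    rw [Complex.betaIntegral, intervalIntegral.integral_of_le zero_le_one,
      integral_Ioc_eq_integral_Ioo, hsubst, setIntegral_univ]
    simp only [habs, G, sigmoid_deriv_smul_betaIntegrand]

theorem sigmoid_cpow_one_sub_mul_sigmoid_neg_cpow (s : ℂ) (x : ℝ) :
    (sigmoid x : ℂ) ^ (1 - s) * (sigmoid (-x) : ℂ) ^ s =
      Complex.exp (-s * x) / ((1 + Real.exp (-x) : ℝ) : ℂ) := by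
  have h₀ : (sigmoid x : ℂ) ≠ 0 := by exact_mod_cast (sigmoid_pos x).ne'
  rw [← sigmoid_mul_rexp_neg, Complex.ofReal_mul,
    Complex.mul_cpow_ofReal_nonneg (sigmoid_pos x).le (exp_pos _).le, ← mul_assoc,
    ← Complex.cpow_add _ _ h₀, sub_add_cancel, Complex.cpow_one, Complex.ofReal_exp_cpow,
    sigmoid_def]
  push_cast
  ring_nf

theorem integral_cexp_neg_mul_div_one_add_exp_neg {s : ℂ} (hs₀ : 0 < s.re) (hs₁ : s.re < 1) :
    Integrable (fun x : ℝ => Complex.exp (-s * x) / ((1 + Real.exp (-x) : ℝ) : ℂ)) ∧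
      ∫ x : ℝ, Complex.exp (-s * x) / ((1 + Real.exp (-x) : ℝ) : ℂ) = π / Complex.sin (π * s) := by
  simp_rw [← sigmoid_cpow_one_sub_mul_sigmoid_neg_cpow, ← Complex.betaIntegral_one_sub_self hs₀ hs₁]
  exact integral_sigmoid_cpow_mul_sigmoid_neg_cpow_eq_betaIntegral (by simpa using hs₁) hs₀

end Real

/-- For `0 < c < 1` and `u ∈ ℝ`, the integral
`(1/2π)∫ e^{−(2πc+iu)r}/(1+e^{−2πr}) dr` converges absolutely and equals
`(1/4π) csc(πc + iu/2)`. -/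
theorem integral_exp_div_one_add_exp (c : ℝ) (hc0 : 0 < c) (hc1 : c < 1) (u : ℝ) :
    Integrable (fun r : ℝ =>
        Complex.exp (-(2 * π * c + Complex.I * u) * r) /
          ((1 + Real.exp (-2 * π * r) : ℝ) : ℂ)) ∧
      (1 / (2 * π) : ℂ) *
          (∫ r : ℝ, Complex.exp (-(2 * π * c + Complex.I * u) * r) /
            ((1 + Real.exp (-2 * π * r) : ℝ) : ℂ))
        = (1 / (4 * π) : ℂ) * (Complex.sin (π * c + Complex.I * u / 2))⁻¹ := by
  set s : ℂ := c + (u / (2 * π) : ℝ) * Complex.I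
  have hs : s.re = c := by
    simp only [s, Complex.add_re, Complex.ofReal_re, Complex.re_ofReal_mul, Complex.I_re, mul_zero,
      add_zero]
  obtain ⟨hint, hval⟩ := integral_cexp_neg_mul_div_one_add_exp_neg (hs ▸ hc0) (hs ▸ hc1)
  have hscale : (fun r : ℝ => Complex.exp (-(2 * π * c + Complex.I * u) * r) /
      ((1 + Real.exp (-2 * π * r) : ℝ) : ℂ)) =
      fun r => Complex.exp (-s * ↑(2 * π * r)) / ((1 + Real.exp (-(2 * π * r)) : ℝ) : ℂ) := by
    funext r
    rw [show -(2 * π * r) = -2 * π * r by ring]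
    congr 2
    simp only [s]
    push_cast
    field_simp
  refine ⟨hscale ▸ hint.comp_mul_left' (by positivity), ?_⟩
  rw [hscale, Measure.integral_comp_mul_left (fun x : ℝ =>
      Complex.exp (-s * x) / ((1 + Real.exp (-x) : ℝ) : ℂ)), hval,
    abs_of_pos (by positivity), Complex.real_smul]
  have hsin : (π : ℂ) * s = π * c + Complex.I * u / 2 := by simp only [s]; push_cast; field_simp
  rw [hsin]
  push_cast
  field_simp
  ring
end

section
/- Fix δ > 0 and z = t+is with t > 0. Set η = t/(4(t²+s²)) and γ = log(1 + (δ/(2π))²). Then for every integer q ≥ 3, (√π e^{−t/4}/(4q√|z|)) · Σ_{n=1}^{q−1} (1/sin(nπ/q)) · (1 + qδ sin²(nπ/q)(4π+qδ)/(2π²))^{−η·h(n,q,δ)} ≤ (e^{−t/4}/√(π|z|)) · (δ/(2π))^{−2ηγ} · (ζ(1+2ηγ) + π), where h(n,q,δ) = log(1 + qδ sin²(nπ/q)(4π+qδ)/(2π²)) and ζ is the Riemann zeta function. -/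
/-!
By Jordan's inequality, `sin (nπ/q) ≥ 2m/q` with `m = min n (q - n)`, so the quantity
`A = qδ sin²(nπ/q)(4π+qδ)/(2π²)` is at least `m² (δ/2π)²`. As `log (1 + A) ≥ γ`, the power
`(1 + A)^(-η log (1 + A))` is at most `(m² (δ/2π)²)^(-ηγ)`, so the `n`-th term is at most
`(q/2) (δ/2π)^(-2ηγ) m^(-(1+2ηγ))`. Each `m` occurs for at most two `n`, which bounds the sum by
`q (δ/2π)^(-2ηγ) ζ(1+2ηγ)`, and `π/4 ≤ 1` absorbs the remaining difference of prefactors.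
-/

open Real

/-- The Riemann zeta function for real argument `s > 1`, `ζ(s) = Σ_{n≥1} n^{−s}`. -/
noncomputable def zetaReal (s : ℝ) : ℝ := ∑' n : ℕ, ((n : ℝ) + 1) ^ (-s)

open Finset

lemma summable_zetaReal {s : ℝ} (hs : 1 < s) :
    Summable (fun n : ℕ => ((n : ℝ) + 1) ^ (-s)) := by
  simpa using (summable_nat_add_iff 1).mpr (summable_nat_rpow.mpr (by linarith : -s < -1))

lemma zetaReal_nonneg (s : ℝ) : 0 ≤ zetaReal s :=
  tsum_nonneg fun _ => rpow_nonneg (by positivity) _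

lemma sum_Icc_rpow_neg_le_zetaReal {s : ℝ} (hs : 1 < s) (N : ℕ) :
    ∑ n ∈ Icc 1 N, (n : ℝ) ^ (-s) ≤ zetaReal s := by
  rw [← Ico_add_one_right_eq_Icc, sum_Ico_eq_sum_range]
  simp only [Nat.cast_add, Nat.cast_one, add_comm 1]
  exact (summable_zetaReal hs).sum_le_tsum (range N)
    (fun _ _ => rpow_nonneg (by positivity) _)

lemma sum_Icc_min_sub_le_two_mul_sum {f : ℕ → ℝ} (hf : ∀ n, 0 ≤ f n) (q : ℕ) :
    ∑ n ∈ Icc 1 (q - 1), f (min n (q - n)) ≤ 2 * ∑ n ∈ Icc 1 (q - 1), f n := by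
  have hreflect : ∑ n ∈ Icc 1 (q - 1), f (q - n) = ∑ n ∈ Icc 1 (q - 1), f n := by
    refine sum_nbij' (q - ·) (q - ·) ?_ ?_ ?_ ?_ (fun _ _ => rfl) <;>
      (intro n hn; simp only [mem_Icc] at *; omega)
  calc ∑ n ∈ Icc 1 (q - 1), f (min n (q - n))
      ≤ ∑ n ∈ Icc 1 (q - 1), (f n + f (q - n)) := by
        refine sum_le_sum fun n _ => ?_
        rcases min_choice n (q - n) with h | h <;> rw [h]
        · linarith [hf (q - n)]
        · linarith [hf n]
    _ = 2 * ∑ n ∈ Icc 1 (q - 1), f n := by rw [sum_add_distrib, hreflect, two_mul]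

lemma sin_natCast_mul_pi_div_eq_sin_min {q n : ℕ} (hn : n ≤ q) :
    sin (n * π / q) = sin ((min n (q - n) : ℕ) * π / q) := by
  rcases min_choice n (q - n) with h | h <;> rw [h]
  rcases Nat.eq_zero_or_pos q with rfl | hq
  · simp
  rw [Nat.cast_sub hn, sub_mul, sub_div, mul_div_cancel_left₀ _ (by positivity), sin_pi_sub]

lemma two_mul_min_div_le_sin {q n : ℕ} (hn : n ≤ q) :
    2 * ((min n (q - n) : ℕ) : ℝ) / q ≤ sin (n * π / q) := by
  rw [sin_natCast_mul_pi_div_eq_sin_min hn]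
  set m := min n (q - n)
  have hm : (2 * m : ℝ) ≤ q := by exact_mod_cast (by omega : 2 * m ≤ q)
  have hx : (m : ℝ) * π / q ≤ π / 2 := by
    rcases Nat.eq_zero_or_pos q with rfl | hq
    · simp only [Nat.cast_zero, div_zero]; positivity
    rw [div_le_div_iff₀ (by positivity) two_pos]; nlinarith [pi_pos]
  calc 2 * (m : ℝ) / q = 2 / π * (m * π / q) := by field_simp
    _ ≤ sin (m * π / q) := mul_le_sin (by positivity) hx

lemma sq_mul_sq_le_of_two_mul_le {δ σ Q M : ℝ} (hδ : 0 < δ) (hQ : 0 < Q) (hM : 0 ≤ M)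
    (h : 2 * M ≤ Q * σ) :
    M ^ 2 * (δ / (2 * π)) ^ 2 ≤ Q * δ * σ ^ 2 * (4 * π + Q * δ) / (2 * π ^ 2) := by
  have hπ := pi_pos
  have hσ : 0 ≤ σ := nonneg_of_mul_nonneg_right (by linarith) hQ
  have h4 : 4 * M ^ 2 ≤ (Q * σ) ^ 2 := by nlinarith
  rw [div_pow, ← mul_div_assoc, div_le_div_iff₀ (by positivity) (by positivity)]
  nlinarith [mul_le_mul_of_nonneg_left h4 (by positivity : (0:ℝ) ≤ π ^ 2 * δ ^ 2),
    mul_nonneg (by positivity : (0:ℝ) ≤ π ^ 3 * Q * δ) (sq_nonneg σ),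
    mul_nonneg (mul_nonneg (sq_nonneg π) (sq_nonneg δ)) (sq_nonneg M)]

lemma one_add_rpow_neg_mul_log_le {η c M A : ℝ} (hη : 0 ≤ η) (hc : 0 < c) (hM : 1 ≤ M)
    (hA : M ^ 2 * c ^ 2 ≤ A) :
    (1 + A) ^ (-(η * log (1 + A))) ≤
      c ^ (-(2 * η * log (1 + c ^ 2))) * M ^ (-(2 * η * log (1 + c ^ 2))) := by
  have hc2 : c ^ 2 ≤ A := le_trans (le_mul_of_one_le_left (sq_nonneg c) (one_le_pow₀ hM)) hA
  have hγ : 0 ≤ log (1 + c ^ 2) := log_nonneg (by nlinarith)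
  calc (1 + A) ^ (-(η * log (1 + A)))
      ≤ (1 + A) ^ (-(η * log (1 + c ^ 2))) := by
        refine rpow_le_rpow_of_exponent_le (by nlinarith) (neg_le_neg ?_)
        exact mul_le_mul_of_nonneg_left (log_le_log (by positivity) (by linarith)) hη
    _ ≤ (M ^ 2 * c ^ 2) ^ (-(η * log (1 + c ^ 2))) :=
        rpow_le_rpow_of_nonpos (by positivity) (by linarith)
          (neg_nonpos.mpr (mul_nonneg hη hγ))
    _ = c ^ (-(2 * η * log (1 + c ^ 2))) * M ^ (-(2 * η * log (1 + c ^ 2))) := by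
        rw [mul_rpow (by positivity) (by positivity), mul_comm, show
          -(2 * η * log (1 + c ^ 2)) = (2 : ℕ) * -(η * log (1 + c ^ 2)) by push_cast; ring,
          rpow_natCast_mul hc.le, rpow_natCast_mul (by linarith)]

lemma inv_mul_rpow_neg_mul_log_le {δ η σ Q M : ℝ} (hδ : 0 < δ) (hη : 0 ≤ η) (hQ : 0 < Q)
    (hM : 1 ≤ M) (hσ : 2 * M ≤ Q * σ) :
    σ⁻¹ * (1 + Q * δ * σ ^ 2 * (4 * π + Q * δ) / (2 * π ^ 2)) ^
        (-(η * log (1 + Q * δ * σ ^ 2 * (4 * π + Q * δ) / (2 * π ^ 2))))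
      ≤ Q / 2 * (δ / (2 * π)) ^ (-(2 * η * log (1 + (δ / (2 * π)) ^ 2))) *
          M ^ (-(1 + 2 * η * log (1 + (δ / (2 * π)) ^ 2))) := by
  have hM0 : 0 < M := by linarith
  have hσinv : σ⁻¹ ≤ Q / (2 * M) := by
    rw [← inv_div]
    exact inv_anti₀ (by positivity) ((div_le_iff₀' hQ).mpr hσ)
  have hpow := one_add_rpow_neg_mul_log_le hη (by positivity) hM
    (sq_mul_sq_le_of_two_mul_le hδ hQ hM0.le hσ)
  calc _ ≤ Q / (2 * M) * ((δ / (2 * π)) ^ (-(2 * η * log (1 + (δ / (2 * π)) ^ 2))) *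
          M ^ (-(2 * η * log (1 + (δ / (2 * π)) ^ 2)))) :=
        mul_le_mul hσinv hpow (rpow_nonneg (by positivity) _) (by positivity)
    _ = _ := by
        rw [neg_add, rpow_add hM0, rpow_neg_one]
        field_simp

theorem sum_inv_sin_mul_rpow_le {δ η : ℝ} (hδ : 0 < δ) (hη : 0 < η) (q : ℕ) :
    ∑ n ∈ Icc 1 (q - 1), (sin (n * π / q))⁻¹ *
        (1 + q * δ * sin (n * π / q) ^ 2 * (4 * π + q * δ) / (2 * π ^ 2)) ^
          (-(η * log (1 + q * δ * sin (n * π / q) ^ 2 * (4 * π + q * δ) / (2 * π ^ 2))))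
      ≤ q * (δ / (2 * π)) ^ (-(2 * η * log (1 + (δ / (2 * π)) ^ 2))) *
          zetaReal (1 + 2 * η * log (1 + (δ / (2 * π)) ^ 2)) := by
  set γ := log (1 + (δ / (2 * π)) ^ 2)
  set K := (δ / (2 * π)) ^ (-(2 * η * γ))
  have hγ : 0 < γ := log_pos (lt_add_of_pos_right _ (by positivity))
  have hp : 1 < 1 + 2 * η * γ := by nlinarith
  calc _ ≤ ∑ n ∈ Icc 1 (q - 1), q / 2 * K * ((min n (q - n) : ℕ) : ℝ) ^ (-(1 + 2 * η * γ)) := by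
        refine sum_le_sum fun n hn => ?_
        rw [mem_Icc] at hn
        have hq : (0 : ℝ) < q := by norm_cast; omega
        refine inv_mul_rpow_neg_mul_log_le hδ hη.le hq (by norm_cast; omega) ?_
        rw [← div_le_iff₀' hq]
        exact two_mul_min_div_le_sin (by omega)
    _ = q / 2 * K * ∑ n ∈ Icc 1 (q - 1), ((min n (q - n) : ℕ) : ℝ) ^ (-(1 + 2 * η * γ)) :=
        (mul_sum ..).symm
    _ ≤ q / 2 * K * (2 * zetaReal (1 + 2 * η * γ)) := by
        gcongr
        calc _ ≤ 2 * ∑ n ∈ Icc 1 (q - 1), (n : ℝ) ^ (-(1 + 2 * η * γ)) :=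
              sum_Icc_min_sub_le_two_mul_sum (f := fun m : ℕ => (m : ℝ) ^ (-(1 + 2 * η * γ)))
                (fun _ => rpow_nonneg (Nat.cast_nonneg _) _) q
          _ ≤ _ := by gcongr; exact sum_Icc_rpow_neg_le_zetaReal hp _
    _ = q * K * zetaReal (1 + 2 * η * γ) := by ring

lemma sqrt_pi_mul_div_mul_le {E K Z Q r : ℝ} (hE : 0 ≤ E) (hK : 0 ≤ K) (hZ : 0 ≤ Z)
    (hQ : 0 ≤ Q) :
    √π * E / (4 * Q * √r) * (Q * K * Z) ≤ E / √(π * r) * K * (Z + π) := by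
  rcases hQ.eq_or_lt with rfl | hQ
  · simp only [mul_zero, zero_mul, div_zero]
    positivity
  have hπ : √π * √π = π := mul_self_sqrt pi_pos.le
  have hsπ : 0 < √π := sqrt_pos.mpr pi_pos
  have hlhs : √π * E / (4 * Q * √r) * (Q * K * Z) = √π * Z / 4 * (E * K / √r) := by
    field_simp
  have hrhs : E / √(π * r) * K * (Z + π) = (Z + π) / √π * (E * K / √r) := by
    rw [sqrt_mul pi_pos.le]; ring
  rw [hlhs, hrhs]
  refine mul_le_mul_of_nonneg_right ?_ (by positivity)
  rw [div_le_div_iff₀ four_pos hsπ, mul_assoc, mul_comm Z, ← mul_assoc, hπ]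
  nlinarith [pi_le_four]

theorem elliptic_trace_sum_bound_general (δ t s : ℝ) (hδ : 0 < δ) (ht : 0 < t)
    (q : ℕ) :
    Real.sqrt π * Real.exp (-t / 4) / (4 * q * Real.sqrt (Real.sqrt (t ^ 2 + s ^ 2))) *
        ∑ n ∈ Finset.Icc 1 (q - 1),
          (Real.sin (n * π / q))⁻¹ *
            (1 + q * δ * Real.sin (n * π / q) ^ 2 * (4 * π + q * δ) / (2 * π ^ 2)) ^
              (-(t / (4 * (t ^ 2 + s ^ 2)) *
                Real.log (1 + q * δ * Real.sin (n * π / q) ^ 2 * (4 * π + q * δ) / (2 * π ^ 2))))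
      ≤ Real.exp (-t / 4) / Real.sqrt (π * Real.sqrt (t ^ 2 + s ^ 2)) *
          (δ / (2 * π)) ^
            (-(2 * (t / (4 * (t ^ 2 + s ^ 2))) * Real.log (1 + (δ / (2 * π)) ^ 2))) *
          (zetaReal (1 + 2 * (t / (4 * (t ^ 2 + s ^ 2))) * Real.log (1 + (δ / (2 * π)) ^ 2)) + π) := by
  have hη : 0 < t / (4 * (t ^ 2 + s ^ 2)) := by positivity
  refine (mul_le_mul_of_nonneg_left (sum_inv_sin_mul_rpow_le hδ hη q) (by positivity)).trans ?_
  exact sqrt_pi_mul_div_mul_le (exp_pos _).le (rpow_nonneg (by positivity) _)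
    (zetaReal_nonneg _) q.cast_nonneg

/-- The key estimate in the analysis of the elliptic heat trace: for `δ > 0`,
`z = t+is` with `t > 0`, `η = t/(4(t²+s²))`, `γ = log(1+(δ/2π)²)`, and `q ≥ 3`,
`(√π e^{−t/4}/(4q√|z|)) Σ_{n=1}^{q−1} (1/sin(nπ/q))(1 + qδ sin²(nπ/q)(4π+qδ)/(2π²))^{−η h(n,q,δ)}
  ≤ (e^{−t/4}/√(π|z|)) (δ/2π)^{−2ηγ} (ζ(1+2ηγ) + π)`,
where `h(n,q,δ) = log(1 + qδ sin²(nπ/q)(4π+qδ)/(2π²))` and `|z| = √(t²+s²)`. -/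
theorem elliptic_trace_sum_bound (δ t s : ℝ) (hδ : 0 < δ) (ht : 0 < t)
    (q : ℕ) (hq : 3 ≤ q) :
    Real.sqrt π * Real.exp (-t / 4) / (4 * q * Real.sqrt (Real.sqrt (t ^ 2 + s ^ 2))) *
        ∑ n ∈ Finset.Icc 1 (q - 1),
          (Real.sin (n * π / q))⁻¹ *
            (1 + q * δ * Real.sin (n * π / q) ^ 2 * (4 * π + q * δ) / (2 * π ^ 2)) ^
              (-(t / (4 * (t ^ 2 + s ^ 2)) *
                Real.log (1 + q * δ * Real.sin (n * π / q) ^ 2 * (4 * π + q * δ) / (2 * π ^ 2))))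
      ≤ Real.exp (-t / 4) / Real.sqrt (π * Real.sqrt (t ^ 2 + s ^ 2)) *
          (δ / (2 * π)) ^
            (-(2 * (t / (4 * (t ^ 2 + s ^ 2))) * Real.log (1 + (δ / (2 * π)) ^ 2))) *
          (zetaReal (1 + 2 * (t / (4 * (t ^ 2 + s ^ 2))) * Real.log (1 + (δ / (2 * π)) ^ 2)) + π) :=
  elliptic_trace_sum_bound_general δ t s hδ ht q
end
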